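/- Let Φ ∈ C¹([0,∞)) be a non-negative convex function with Φ(0)=Φ'(0)=0 and let (n_k)_{k≥0} be a non-decreasing sequence of integers with n₀=1, n₁≥2, and n_k → ∞ as k → ∞. Then for every f ∈ L¹(Ω,μ) and every k ≥ 1: ∫_{{|f|<n_k}} Φ(|f|) dμ ≤ Φ'(1) ∫_Ω |f| dμ + Σ_{j=0}^{k−1} (Φ'(n_{j+1}) − Φ'(n_j)) ∫_{{|f|≥n_j}} |f| dμ. -/

import Mathlib

/-!
For `0 ≤ t < n_k`, convexity and `Φ(0) = 0` give `Φ(t) ≤ t Φ'(t)`, and since `Φ'` is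
non-decreasing, `Φ'(t)` is at most `Φ'(n_{j+1}) = Φ'(1) + Σ_{i ≤ j} (Φ'(n_{i+1}) - Φ'(n_i))`
for the `j` with `n_j ≤ t < n_{j+1}` (or `Φ'(1)` if `t < 1`). This is the pointwise bound
`Φ(t) ≤ Φ'(1) t + Σ_{j < k} (Φ'(n_{j+1}) - Φ'(n_j)) t 𝟙[n_j ≤ t]`, with non-negative
coefficients; integrating it with `t = |f|` over `{|f| < n_k}` gives the estimate.
-/

open MeasureTheory Filter Topology

namespace ConvexOn

variable {S : Set ℝ} {f f' : ℝ → ℝ}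

theorem monotoneOn_of_hasDerivWithinAt (hfc : ConvexOn ℝ S f)
    (hf' : ∀ x ∈ S, HasDerivWithinAt f (f' x) S x) : MonotoneOn f' S := by
  intro x hx y hy hxy
  rcases eq_or_lt_of_le hxy with rfl | hlt
  · rfl
  · exact (hfc.le_slope_of_hasDerivWithinAt hx hy hlt (hf' x hx)).trans
      (hfc.slope_le_of_hasDerivWithinAt hx hy hlt (hf' y hy))

theorem sub_le_mul_of_hasDerivWithinAt {x y d : ℝ} (hfc : ConvexOn ℝ S f) (hx : x ∈ S)
    (hy : y ∈ S) (hxy : x ≤ y) (hf' : HasDerivWithinAt f d S y) :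
    f y - f x ≤ (y - x) * d := by
  rcases eq_or_lt_of_le hxy with rfl | hlt
  · simp
  · have hslope := hfc.slope_le_of_hasDerivWithinAt hx hy hlt hf'
    rwa [slope_def_field, div_le_iff₀ (sub_pos.2 hlt), mul_comm] at hslope

end ConvexOn

theorem MonotoneOn.le_add_sum_filter_sub {a : ℕ → ℝ} {c t : ℝ} {φ : ℝ → ℝ}
    (hφ : MonotoneOn φ (Set.Ici c)) (ha : Monotone a) (hca : c ≤ a 0) (hct : c ≤ t)
    {k : ℕ} (htk : t < a k) :
    φ t ≤ φ (a 0) + ∑ j ∈ (Finset.range k).filter (a · ≤ t), (φ (a (j + 1)) - φ (a j)) := by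
  have ha_mem : ∀ j, a j ∈ Set.Ici c := fun j => hca.trans (ha (Nat.zero_le j))
  induction k with
  | zero => simpa using hφ hct (ha_mem 0) htk.le
  | succ k ih =>
    by_cases hk : a k ≤ t
    · have hfilter : (Finset.range (k + 1)).filter (a · ≤ t) = Finset.range (k + 1) :=
        Finset.filter_true_of_mem fun j hj =>
          (ha (Nat.lt_succ_iff.1 (Finset.mem_range.1 hj))).trans hk
      rw [hfilter, Finset.sum_range_sub (fun j => φ (a j)), add_sub_cancel]
      exact hφ hct (ha_mem _) htk.le
    · rw [Finset.range_add_one, Finset.filter_insert, if_neg hk]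
      exact ih (not_le.1 hk)

theorem ConvexOn.le_mul_add_sum_of_lt_of_hasDerivWithinAt {Φ Φ' : ℝ → ℝ} {a : ℕ → ℝ} {t : ℝ}
    {k : ℕ} (hconv : ConvexOn ℝ (Set.Ici 0) Φ)
    (hderiv : ∀ r ∈ Set.Ici (0 : ℝ), HasDerivWithinAt Φ (Φ' r) (Set.Ici 0) r) (hΦ0 : Φ 0 = 0)
    (ha : Monotone a) (ha0 : 0 ≤ a 0) (ht : 0 ≤ t) (htk : t < a k) :
    Φ t ≤ Φ' (a 0) * t +
      ∑ j ∈ Finset.range k, (Φ' (a (j + 1)) - Φ' (a j)) * if a j ≤ t then t else 0 := by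
  have hΦt : Φ t ≤ t * Φ' t := by
    simpa [hΦ0] using hconv.sub_le_mul_of_hasDerivWithinAt Set.self_mem_Ici ht ht (hderiv t ht)
  have hΦ't := (hconv.monotoneOn_of_hasDerivWithinAt hderiv).le_add_sum_filter_sub ha ha0 ht htk
  calc Φ t ≤ t * Φ' t := hΦt
    _ ≤ t * (Φ' (a 0) +
          ∑ j ∈ (Finset.range k).filter (a · ≤ t), (Φ' (a (j + 1)) - Φ' (a j))) :=
      mul_le_mul_of_nonneg_left hΦ't ht
    _ = _ := by
      rw [mul_comm, add_mul, Finset.sum_mul, Finset.sum_filter]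
      simp only [mul_ite, mul_zero]

theorem setIntegral_le_mul_integral_add_sum_setIntegral {Ω ι : Type*}
    [MeasurableSpace Ω] {μ : Measure Ω} {u v : Ω → ℝ} {A : Set Ω} {B : ι → Set Ω} {b : ℝ}
    {c : ι → ℝ} {s : Finset ι} (hu : Integrable u μ) (hu0 : 0 ≤ u) (hv0 : 0 ≤ v)
    (hA : NullMeasurableSet A μ) (hB : ∀ j, NullMeasurableSet (B j) μ) (hb : 0 ≤ b)
    (hc : ∀ j ∈ s, 0 ≤ c j)
    (hvA : ∀ x ∈ A, v x ≤ b * u x + ∑ j ∈ s, c j * (B j).indicator u x) :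
    ∫ x in A, v x ∂μ ≤ b * ∫ x, u x ∂μ + ∑ j ∈ s, c j * ∫ x in B j, u x ∂μ := by
  set F : Ω → ℝ := fun x => b * u x + ∑ j ∈ s, c j * (B j).indicator u x
  have hind : ∀ j, Integrable ((B j).indicator u) μ := fun j => hu.indicator₀ (hB j)
  have hF : Integrable F μ :=
    (hu.const_mul b).add (integrable_finsetSum _ fun j _ => (hind j).const_mul _)
  have hF0 : 0 ≤ F := fun x =>
    add_nonneg (mul_nonneg hb (hu0 x)) <| Finset.sum_nonneg fun j hj =>
      mul_nonneg (hc j hj) (Set.indicator_nonneg (fun y _ => hu0 y) x)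
  calc ∫ x in A, v x ∂μ ≤ ∫ x in A, F x ∂μ :=
        integral_mono_of_nonneg (ae_of_all _ hv0) hF.restrict ((ae_restrict_mem₀ hA).mono hvA)
    _ ≤ ∫ x, F x ∂μ := setIntegral_le_integral hF (ae_of_all _ hF0)
    _ = _ := by
      rw [integral_add (hu.const_mul b) (integrable_finsetSum _ fun j _ => (hind j).const_mul _),
        integral_const_mul, integral_finsetSum _ fun j _ => (hind j).const_mul _]
      simp_rw [integral_const_mul, integral_indicator₀ (hB _)]

theorem tail_sum_estimate
    {Ω : Type*} [MeasurableSpace Ω] (μ : Measure Ω)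
    (Φ Φ' : ℝ → ℝ)
    (hderiv : ∀ r ∈ Set.Ici (0:ℝ), HasDerivWithinAt Φ (Φ' r) (Set.Ici 0) r)
    (hconv : ConvexOn ℝ (Set.Ici 0) Φ)
    (hnonneg : ∀ r ∈ Set.Ici (0:ℝ), 0 ≤ Φ r)
    (hΦ0 : Φ 0 = 0) (hΦ'0 : Φ' 0 = 0)
    (n : ℕ → ℕ) (hmono : Monotone n) (hn0 : n 0 = 1)
    (f : Ω → ℝ) (hf : Integrable f μ) (k : ℕ) :
    ∫ x in {y | |f y| < (n k : ℝ)}, Φ |f x| ∂μ ≤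
      Φ' 1 * ∫ x, |f x| ∂μ +
        ∑ j ∈ Finset.range k,
          (Φ' (n (j+1)) - Φ' (n j)) * ∫ x in {y | (n j : ℝ) ≤ |f y|}, |f x| ∂μ := by
  have hΦ'_mono := hconv.monotoneOn_of_hasDerivWithinAt hderiv
  have hn_mono : Monotone fun j => (n j : ℝ) := fun i j hij => Nat.cast_le.2 (hmono hij)
  have hf_abs := hf.abs.aemeasurable
  refine setIntegral_le_mul_integral_add_sum_setIntegral hf.abs (fun x => abs_nonneg (f x))
    (fun x => hnonneg _ (abs_nonneg (f x))) (nullMeasurableSet_lt hf_abs aemeasurable_const)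
    (fun j => nullMeasurableSet_le aemeasurable_const hf_abs) ?_ ?_ fun x hx => ?_
  · simpa [hΦ'0] using hΦ'_mono Set.self_mem_Ici (Set.mem_Ici.2 zero_le_one) zero_le_one
  · exact fun j _ => sub_nonneg.2 <|
      hΦ'_mono (Set.mem_Ici.2 (Nat.cast_nonneg _)) (Set.mem_Ici.2 (Nat.cast_nonneg _))
        (hn_mono j.le_succ)
  · simpa [hn0, Set.indicator_apply] using
      hconv.le_mul_add_sum_of_lt_of_hasDerivWithinAt hderiv hΦ0 hn_mono (Nat.cast_nonneg _)
        (abs_nonneg (f x)) hx
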